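/- arXiv:2409.03945 — 4 statements merged into one kernel-verified Lean document; each statement's English description precedes it below -/
import Mathlib

section
/- Let p, p̃ be tropical polynomials in d variables with extended Newton polytopes P = ENewt(p) and P̃ = ENewt(p̃). Then (1/ρ)·max_{x ∈ B} |p(x) − p̃(x)| ≤ H(P, P̃), where B = {x ∈ ℝ^d : ‖x‖ ≤ r} and ρ = √(r² + 1), and H denotes the Hausdorff distance with respect to the Euclidean norm on ℝ^{d+1}. -/
/-!
With `w = (x, 1) ∈ ℝ^{d+1}`, a tropical polynomial is the support function of its extended Newton
polytope: `p x = max_i ⟪w, (aᵢ, bᵢ)⟫ = sup_{z ∈ ENewt p} ⟪w, z⟫`. The linear functional `⟪w, ·⟫`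
is `‖w‖`-Lipschitz, so support functions at `w` of two sets differ by at most `‖w‖` times their
Hausdorff distance, and `‖w‖ = √(‖x‖² + 1) ≤ √(r² + 1)`.
-/

open Metric Set Finset

section Lipschitz

variable {X : Type*} [PseudoMetricSpace X] {f : X → ℝ} {K : NNReal} {T : Set X} {M : ℝ}

theorem LipschitzWith.sub_le_mul_infDist (hf : LipschitzWith K f) (hT : T.Nonempty)
    (hM : ∀ v ∈ T, f v ≤ M) (u : X) : f u - M ≤ K * infDist u T := by
  have : Nonempty T := hT.to_subtype
  rw [infDist_eq_iInf, Real.mul_iInf_of_nonneg K.coe_nonneg]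
  refine le_ciInf fun v => ?_
  linarith [hf.le_add_mul u v, hM v v.2]

theorem LipschitzWith.sub_le_mul_hausdorffDist (hf : LipschitzWith K f) (hT : T.Nonempty)
    (hM : ∀ v ∈ T, f v ≤ M) {S : Set X} {u : X} (hu : u ∈ S) (hST : hausdorffEDist S T ≠ ⊤) :
    f u - M ≤ K * hausdorffDist S T :=
  (hf.sub_le_mul_infDist hT hM u).trans <|
    mul_le_mul_of_nonneg_left (infDist_le_hausdorffDist_of_mem hu hST) K.coe_nonneg

end Lipschitz

theorem hausdorffEDist_convexHull_range_ne_top {E ι κ : Type*} [NormedAddCommGroup E]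
    [NormedSpace ℝ E] [Finite ι] [Finite κ] [Nonempty ι] [Nonempty κ] (u : ι → E) (v : κ → E) :
    hausdorffEDist (convexHull ℝ (range u)) (convexHull ℝ (range v)) ≠ ⊤ :=
  hausdorffEDist_ne_top_of_nonempty_of_bounded (range_nonempty u).convexHull
    (range_nonempty v).convexHull (isBounded_convexHull.2 (finite_range u).isBounded)
    (isBounded_convexHull.2 (finite_range v).isBounded)

section InnerProductSpace

variable {F ι κ : Type*} [NormedAddCommGroup F] [InnerProductSpace ℝ F]
  [Fintype ι] [Nonempty ι] [Fintype κ] [Nonempty κ]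

theorem lipschitzWith_inner_left (w : F) : LipschitzWith ‖w‖₊ fun z => inner ℝ w z := by
  refine LipschitzWith.of_le_add_mul _ fun y z => ?_
  have := real_inner_le_norm w (y - z)
  rw [inner_sub_right, ← dist_eq_norm] at this
  rw [coe_nnnorm]
  linarith

theorem inner_le_sup'_of_mem_convexHull_range (w : F) (v : ι → F) {z : F}
    (hz : z ∈ convexHull ℝ (range v)) :
    inner ℝ w z ≤ univ.sup' univ_nonempty fun i => inner ℝ w (v i) := by
  obtain ⟨_, ⟨i, rfl⟩, hi⟩ :=
    ((innerₗ F w).convexOn convex_univ).exists_ge_of_mem_convexHull (subset_univ _) hz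
  exact hi.trans (le_sup' (fun i => inner ℝ w (v i)) (mem_univ i))

theorem sup'_inner_sub_sup'_inner_le_mul_hausdorffDist (w : F) (u : ι → F) (v : κ → F) :
    (univ.sup' univ_nonempty fun i => inner ℝ w (u i)) -
        (univ.sup' univ_nonempty fun j => inner ℝ w (v j)) ≤
      ‖w‖ * hausdorffDist (convexHull ℝ (range u)) (convexHull ℝ (range v)) := by
  obtain ⟨i, -, hi⟩ := exists_mem_eq_sup' univ_nonempty fun i => inner ℝ w (u i)
  rw [hi]
  exact (lipschitzWith_inner_left w).sub_le_mul_hausdorffDist (range_nonempty v).convexHull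
    (fun z hz => inner_le_sup'_of_mem_convexHull_range w v hz)
    (subset_convexHull ℝ _ (mem_range_self i)) (hausdorffEDist_convexHull_range_ne_top u v)

theorem abs_sup'_inner_sub_sup'_inner_le_mul_hausdorffDist (w : F) (u : ι → F) (v : κ → F) :
    |(univ.sup' univ_nonempty fun i => inner ℝ w (u i)) -
        (univ.sup' univ_nonempty fun j => inner ℝ w (v j))| ≤
      ‖w‖ * hausdorffDist (convexHull ℝ (range u)) (convexHull ℝ (range v)) := by
  refine abs_sub_le_iff.2 ⟨sup'_inner_sub_sup'_inner_le_mul_hausdorffDist w u v, ?_⟩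
  rw [hausdorffDist_comm]
  exact sup'_inner_sub_sup'_inner_le_mul_hausdorffDist w v u

end InnerProductSpace

theorem WithLp.prod_inner_equiv_symm_one {E : Type*} [NormedAddCommGroup E]
    [InnerProductSpace ℝ E] (x a : E) (b : ℝ) :
    inner ℝ ((WithLp.equiv 2 (E × ℝ)).symm (x, 1)) ((WithLp.equiv 2 (E × ℝ)).symm (a, b)) =
      inner ℝ a x + b := by
  simp [WithLp.prod_inner_apply, real_inner_comm]

theorem WithLp.prod_norm_equiv_symm_one {E : Type*} [SeminormedAddCommGroup E] (x : E) :
    ‖(WithLp.equiv 2 (E × ℝ)).symm (x, 1)‖ = √(‖x‖ ^ 2 + 1) := by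
  simp [WithLp.prod_norm_eq_of_L2]

theorem tropical_approx_le_hausdorffDist_general {d n m : ℕ} (r : ℝ)
    (a : Fin (n + 1) → EuclideanSpace ℝ (Fin d)) (b : Fin (n + 1) → ℝ)
    (c : Fin (m + 1) → EuclideanSpace ℝ (Fin d)) (e : Fin (m + 1) → ℝ)
    (P Pt : Set (WithLp 2 (EuclideanSpace ℝ (Fin d) × ℝ)))
    (hP : P = convexHull ℝ (Set.range fun i => (WithLp.equiv 2 _).symm (a i, b i)))
    (hPt : Pt = convexHull ℝ (Set.range fun j => (WithLp.equiv 2 _).symm (c j, e j))) :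
    ∀ x : EuclideanSpace ℝ (Fin d), ‖x‖ ≤ r →
      |Finset.univ.sup' Finset.univ_nonempty (fun i => (inner ℝ (a i) x : ℝ) + b i) -
          Finset.univ.sup' Finset.univ_nonempty (fun j => (inner ℝ (c j) x : ℝ) + e j)| ≤
        Real.sqrt (r ^ 2 + 1) * Metric.hausdorffDist P Pt := by
  intro x hx
  subst hP hPt
  have hw : ‖(WithLp.equiv 2 (EuclideanSpace ℝ (Fin d) × ℝ)).symm (x, 1)‖ ≤ √(r ^ 2 + 1) := by
    rw [WithLp.prod_norm_equiv_symm_one]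
    gcongr
  have hsupport := abs_sup'_inner_sub_sup'_inner_le_mul_hausdorffDist
    ((WithLp.equiv 2 (EuclideanSpace ℝ (Fin d) × ℝ)).symm (x, 1))
    (fun i => (WithLp.equiv 2 _).symm (a i, b i)) (fun j => (WithLp.equiv 2 _).symm (c j, e j))
  simp only [WithLp.prod_inner_equiv_symm_one] at hsupport
  exact hsupport.trans (mul_le_mul_of_nonneg_right hw hausdorffDist_nonneg)

/-- Hausdorff-distance bound for tropical polynomials: for all `x` in the ball of radius `r`,
`|p x - p̃ x| ≤ ρ · H(P, P̃)` with `ρ = √(r² + 1)`, where `P, P̃ ⊆ ℝ^{d+1}` (with the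
Euclidean norm) are the extended Newton polytopes. Equivalently
`(1/ρ) max_{x ∈ B} |p x - p̃ x| ≤ H(P, P̃)`. -/
theorem tropical_approx_le_hausdorffDist {d n m : ℕ} (r : ℝ) (hr : 0 < r)
    (a : Fin (n + 1) → EuclideanSpace ℝ (Fin d)) (b : Fin (n + 1) → ℝ)
    (c : Fin (m + 1) → EuclideanSpace ℝ (Fin d)) (e : Fin (m + 1) → ℝ)
    (P Pt : Set (WithLp 2 (EuclideanSpace ℝ (Fin d) × ℝ)))
    (hP : P = convexHull ℝ (Set.range fun i => (WithLp.equiv 2 _).symm (a i, b i)))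
    (hPt : Pt = convexHull ℝ (Set.range fun j => (WithLp.equiv 2 _).symm (c j, e j))) :
    ∀ x : EuclideanSpace ℝ (Fin d), ‖x‖ ≤ r →
      |Finset.univ.sup' Finset.univ_nonempty (fun i => (inner ℝ (a i) x : ℝ) + b i) -
          Finset.univ.sup' Finset.univ_nonempty (fun j => (inner ℝ (c j) x : ℝ) + e j)| ≤
        Real.sqrt (r ^ 2 + 1) * Metric.hausdorffDist P Pt :=
  tropical_approx_le_hausdorffDist_general r a b c e P Pt hP hPt
end

section
/- Let p, p̃ be tropical polynomials with extended Newton polytopes P and P̃. If H(P, P̃) ≤ ε (Hausdorff distance in ℝ^{d+1}), then for every x with ‖x‖ ≤ r, |p(x) − p̃(x)| ≤ ε·√(r² + 1). -/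
/-!
With `w = (x, 1)`, the value `p x` is the support function of `P` in direction `w`, i.e. the
maximum of `⟪·, w⟫` over `P`. Each point of `P` lies within `ε` of a point of `P̃`, where
`⟪·, w⟫` is smaller by at most `ε ‖w‖` and in turn bounded by its value at some vertex of `P̃`.
Hence `p x ≤ p̃ x + ε ‖w‖`, symmetrically, and `‖w‖ = √(‖x‖² + 1) ≤ √(r² + 1)`.
-/

open Metric

open scoped RealInnerProductSpace

lemma norm_toLp_prod_one {F : Type*} [SeminormedAddCommGroup F] (x : F) :
    ‖WithLp.toLp 2 (x, (1 : ℝ))‖ = √(‖x‖ ^ 2 + 1) := by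
  simp [WithLp.prod_norm_eq_of_L2]

section SupportFunction

variable {E : Type*} [NormedAddCommGroup E] [InnerProductSpace ℝ E]

lemma exists_inner_le_of_mem_convexHull {s : Set E} {z : E} (hz : z ∈ convexHull ℝ s) (w : E) :
    ∃ y ∈ s, ⟪z, w⟫ ≤ ⟪y, w⟫ := by
  simp only [real_inner_comm w]
  exact ((innerSL ℝ w).toLinearMap.convexOn convex_univ).exists_ge_of_mem_convexHull
    (Set.subset_univ _) hz

lemma exists_inner_le_add_of_infDist_le {t : Set E} (ht : IsCompact t) (hne : t.Nonempty)
    {y : E} {ε : ℝ} (hy : infDist y t ≤ ε) (w : E) :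
    ∃ z ∈ t, ⟪y, w⟫ ≤ ⟪z, w⟫ + ε * ‖w‖ := by
  obtain ⟨z, hz, hyz⟩ := ht.exists_infDist_eq_dist hne y
  refine ⟨z, hz, ?_⟩
  calc ⟪y, w⟫ = ⟪z, w⟫ + ⟪y - z, w⟫ := by rw [inner_sub_left]; ring
    _ ≤ ⟪z, w⟫ + ‖y - z‖ * ‖w‖ := by gcongr; exact real_inner_le_norm _ _
    _ ≤ ⟪z, w⟫ + ε * ‖w‖ := by rw [← dist_eq_norm, ← hyz]; gcongr

lemma sup'_inner_le_sup'_inner_add_of_hausdorffDist_le {ι κ : Type*} [Fintype ι] [Fintype κ]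
    [Nonempty ι] [Nonempty κ] {f : ι → E} {g : κ → E} {ε : ℝ}
    (hH : hausdorffDist (convexHull ℝ (Set.range f)) (convexHull ℝ (Set.range g)) ≤ ε) (w : E) :
    Finset.univ.sup' Finset.univ_nonempty (fun i => ⟪f i, w⟫) ≤
      Finset.univ.sup' Finset.univ_nonempty (fun j => ⟪g j, w⟫) + ε * ‖w‖ := by
  have hf := (Set.finite_range f).isCompact_convexHull (𝕜 := ℝ)
  have hg := (Set.finite_range g).isCompact_convexHull (𝕜 := ℝ)
  have hg_ne := (Set.range_nonempty g).convexHull (𝕜 := ℝ)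
  have hfin : hausdorffEDist (convexHull ℝ (Set.range f)) (convexHull ℝ (Set.range g)) ≠ ⊤ :=
    hausdorffEDist_ne_top_of_nonempty_of_bounded (Set.range_nonempty f).convexHull hg_ne
      hf.isBounded hg.isBounded
  refine Finset.sup'_le _ _ fun i _ => ?_
  have hfi : f i ∈ convexHull ℝ (Set.range f) := subset_convexHull ℝ _ ⟨i, rfl⟩
  obtain ⟨z, hz, hiz⟩ := exists_inner_le_add_of_infDist_le hg hg_ne
    ((infDist_le_hausdorffDist_of_mem hfi hfin).trans hH) w
  obtain ⟨_, ⟨j, rfl⟩, hzj⟩ := exists_inner_le_of_mem_convexHull hz w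
  have hj := Finset.le_sup' (fun j => ⟪g j, w⟫) (Finset.mem_univ j)
  linarith

lemma inner_toLp_prod_one (a x : E) (b : ℝ) :
    ⟪WithLp.toLp 2 (a, b), WithLp.toLp 2 (x, (1 : ℝ))⟫ = ⟪a, x⟫ + b := by
  simp [WithLp.prod_inner_apply]

end SupportFunction

/-- If the Hausdorff distance between the extended Newton polytopes of two tropical
polynomials is at most `ε`, then for every `x` with `‖x‖ ≤ r`,
`|p x - p̃ x| ≤ ε · √(r² + 1)`. -/
theorem tropical_approx_of_hausdorffDist_le {d n m : ℕ} (r ε : ℝ)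
    (a : Fin (n + 1) → EuclideanSpace ℝ (Fin d)) (b : Fin (n + 1) → ℝ)
    (c : Fin (m + 1) → EuclideanSpace ℝ (Fin d)) (e : Fin (m + 1) → ℝ)
    (hH : Metric.hausdorffDist
        (convexHull ℝ (Set.range fun i =>
          ((WithLp.equiv 2 (EuclideanSpace ℝ (Fin d) × ℝ)).symm (a i, b i))))
        (convexHull ℝ (Set.range fun j =>
          ((WithLp.equiv 2 (EuclideanSpace ℝ (Fin d) × ℝ)).symm (c j, e j)))) ≤ ε) :
    ∀ x : EuclideanSpace ℝ (Fin d), ‖x‖ ≤ r →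
      |Finset.univ.sup' Finset.univ_nonempty (fun i => (inner ℝ (a i) x : ℝ) + b i) -
          Finset.univ.sup' Finset.univ_nonempty (fun j => (inner ℝ (c j) x : ℝ) + e j)| ≤
        ε * Real.sqrt (r ^ 2 + 1) := by
  intro x hx
  have hε : 0 ≤ ε := hausdorffDist_nonneg.trans hH
  have hpq := sup'_inner_le_sup'_inner_add_of_hausdorffDist_le hH (WithLp.toLp 2 (x, 1))
  have hqp := sup'_inner_le_sup'_inner_add_of_hausdorffDist_le
    (hausdorffDist_comm.trans_le hH) (WithLp.toLp 2 (x, 1))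
  simp only [WithLp.equiv_symm_apply, inner_toLp_prod_one, norm_toLp_prod_one] at hpq hqp
  have hw : ε * √(‖x‖ ^ 2 + 1) ≤ ε * √(r ^ 2 + 1) := by gcongr
  rw [abs_sub_le_iff]
  constructor <;> linarith
end

section
/- Let p₁,…,p_n be tropical polynomials and P_i = ENewt(p_i) their extended Newton polytopes. Then the extended Newton polytope of the sum ∑ p_i (with monomial terms all sums of one term from each p_i) equals the Minkowski sum P₁ ⊕ ⋯ ⊕ P_n. In particular, the extended Newton polytope of ∑_{i} c_i·max(a_i^T x + b_i, 0) with all c_i > 0 is the zonotope generated by the vectors c_i·(a_i, b_i) ∈ ℝ^{d+1}. -/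
open scoped Pointwise

/-- The range of a pointwise sum over a dependent product (with all factors nonempty)
equals the pointwise Minkowski sum of the ranges. -/
lemma range_pi_sum {n : ℕ} {E : Type*} [AddCommMonoid E]
    (σ : Fin n → Type*) [∀ i, Nonempty (σ i)]
    (A : (i : Fin n) → σ i → E) :
    (Set.range fun t : (i : Fin n) → σ i => ∑ i, A i (t i)) =
      ∑ i : Fin n, Set.range (A i) := by
  ext x
  rw [Set.mem_fintype_sum]
  constructor
  · rintro ⟨t, rfl⟩
    exact ⟨fun i => A i (t i), fun i => Set.mem_range_self _, rfl⟩
  · rintro ⟨g, hg, rfl⟩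
    choose t ht using hg
    exact ⟨t, by simp [ht]⟩

lemma range_bool_sum {n : ℕ} {E : Type*} [AddCommMonoid E] (w : Fin n → E) :
    (Set.range fun t : Fin n → Bool => ∑ i, if t i then w i else 0) =
      ∑ i : Fin n, Set.range (fun s : Bool => if s then w i else 0) := by
  ext x
  rw [Set.mem_fintype_sum]
  constructor
  · rintro ⟨t, rfl⟩
    exact ⟨fun i => if t i then w i else 0, fun i => Set.mem_range_self _, rfl⟩
  · rintro ⟨g, hg, rfl⟩
    choose t ht using hg
    exact ⟨t, by simp [ht]⟩

/-- (1) The extended Newton polytope of a sum of tropical polynomials `p₁, …, pₙ` (whose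
terms are all sums of one term from each `pᵢ`) is the Minkowski sum of the extended Newton
polytopes. (2) In particular, the extended Newton polytope of
`∑ᵢ cᵢ·max(⟨aᵢ, x⟩ + bᵢ, 0)` with all `cᵢ > 0` — whose term points are all sums
`∑_{i ∈ I} cᵢ·(aᵢ, bᵢ)` over subsets — is the zonotope generated by `cᵢ·(aᵢ, bᵢ)`. -/
theorem enewt_sum_eq_minkowski_and_zonotope {d n : ℕ}
    (k : Fin n → ℕ)
    (A : (i : Fin n) → Fin (k i + 1) → EuclideanSpace ℝ (Fin d) × ℝ)
    (a : Fin n → EuclideanSpace ℝ (Fin d)) (b : Fin n → ℝ)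
    (c : Fin n → ℝ) (hc : ∀ i, 0 < c i) :
    (convexHull ℝ (Set.range fun t : (i : Fin n) → Fin (k i + 1) => ∑ i, A i (t i)) =
      ∑ i : Fin n, convexHull ℝ (Set.range (A i))) ∧
    (convexHull ℝ (Set.range fun t : Fin n → Bool =>
        ∑ i, if t i then c i • ((a i, b i) : EuclideanSpace ℝ (Fin d) × ℝ) else 0) =
      {z : EuclideanSpace ℝ (Fin d) × ℝ | ∃ l : Fin n → ℝ,
        (∀ i, 0 ≤ l i ∧ l i ≤ 1) ∧ z = ∑ i, l i • (c i • ((a i, b i)))}) := by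
  constructor
  · rw [range_pi_sum, convexHull_sum]
  · have h1 : (Set.range fun t : Fin n → Bool =>
        ∑ i, if t i then c i • ((a i, b i) : EuclideanSpace ℝ (Fin d) × ℝ) else 0)
        = ∑ i : Fin n, Set.range (fun s : Bool => if s then c i • ((a i, b i) : EuclideanSpace ℝ (Fin d) × ℝ) else 0) :=
      range_bool_sum (fun i => c i • ((a i, b i) : EuclideanSpace ℝ (Fin d) × ℝ))
    rw [h1, convexHull_sum]
    have h2 : ∀ i, convexHull ℝ (Set.range (fun s : Bool => if s then c i • ((a i, b i) : EuclideanSpace ℝ (Fin d) × ℝ) else 0))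
        = segment ℝ 0 (c i • ((a i, b i) : EuclideanSpace ℝ (Fin d) × ℝ)) := by
      intro i
      have : Set.range (fun s : Bool => if s then c i • ((a i, b i) : EuclideanSpace ℝ (Fin d) × ℝ) else 0) = {0, c i • ((a i, b i) : EuclideanSpace ℝ (Fin d) × ℝ)} := by
        ext x
        constructor
        · rintro ⟨s, rfl⟩; cases s <;> simp
        · rintro (rfl | rfl)
          exacts [⟨false, rfl⟩, ⟨true, rfl⟩]
      rw [this, convexHull_pair]
    simp_rw [h2]
    ext z
    rw [Set.mem_fintype_sum]
    constructor
    · rintro ⟨g, hg, rfl⟩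
      have : ∀ i, ∃ l : ℝ, (0 ≤ l ∧ l ≤ 1) ∧ g i = l • (c i • ((a i, b i) : EuclideanSpace ℝ (Fin d) × ℝ)) := by
        intro i
        rcases (segment_eq_image' ℝ (0 : EuclideanSpace ℝ (Fin d) × ℝ) (c i • ((a i, b i) : EuclideanSpace ℝ (Fin d) × ℝ)) ▸ hg i) with
          ⟨l, hl, hgl⟩
        exact ⟨l, ⟨hl.1, hl.2⟩, by simpa using hgl.symm⟩
      choose l hl hgl using this
      exact ⟨l, hl, by simp [hgl]⟩
    · rintro ⟨l, hl, rfl⟩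
      refine ⟨fun i => l i • (c i • ((a i, b i) : EuclideanSpace ℝ (Fin d) × ℝ)), fun i => ?_, rfl⟩
      rw [segment_eq_image' ℝ]
      exact ⟨l i, ⟨(hl i).1, (hl i).2⟩, by simp⟩
end

section
/- Let t₁,…,t_n ≥ 0 be partitioned into K nonempty clusters I₁,…,I_K, let δ ≥ 0, and let N_max = max_k |I_k|. Then ∑_{i=1}^n min{t_i, δ} ≤ K·δ + (1 − 1/N_max)·∑_{i=1}^n t_i. -/
/-- If nonnegative reals `t₁, …, tₙ` are partitioned into `K` nonempty clusters
`I₁, …, I_K`, `δ ≥ 0`, and `N_max = max_k |I_k|`, then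
`∑ᵢ min{tᵢ, δ} ≤ K·δ + (1 - 1/N_max)·∑ᵢ tᵢ` : the TropNNC bound is tighter
than the Zonotope K-means bound. -/
theorem min_sum_le_kmeans_bound {n K : ℕ}
    (t : Fin (n + 1) → ℝ) (ht : ∀ i, 0 ≤ t i) (δ : ℝ) (hδ : 0 ≤ δ)
    (I : Fin (K + 1) → Finset (Fin (n + 1)))
    (hne : ∀ k, (I k).Nonempty)
    (hdisj : ∀ k l, k ≠ l → Disjoint (I k) (I l))
    (hcover : ∀ i, ∃ k, i ∈ I k) :
    ∑ i, min (t i) δ ≤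
      (K + 1 : ℝ) * δ +
        (1 - 1 / (Finset.univ.sup' Finset.univ_nonempty fun k => ((I k).card : ℝ))) *
          ∑ i, t i := by
  set N : ℝ := Finset.univ.sup' Finset.univ_nonempty fun k => ((I k).card : ℝ) with hNdef
  have hNpos : (0:ℝ) < N := by
    have h0 : (0:ℝ) < ((I 0).card : ℝ) :=
      Nat.cast_pos.mpr (Finset.card_pos.mpr (hne 0))
    exact lt_of_lt_of_le h0 (Finset.le_sup' (fun k => ((I k).card : ℝ)) (Finset.mem_univ (0 : Fin (K+1))))
  have hbi : Finset.univ.biUnion I = Finset.univ := by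
    ext i
    simp only [Finset.mem_biUnion, Finset.mem_univ, true_and, iff_true]
    exact hcover i
  have hsum : ∀ f : Fin (n+1) → ℝ, ∑ i, f i = ∑ k, ∑ i ∈ I k, f i := by
    intro f
    rw [← hbi, Finset.sum_biUnion]
    intro k _ l _ hkl
    exact hdisj k l hkl
  have key : ∀ k, ∑ i ∈ I k, min (t i) δ ≤ δ + (1 - 1/N) * ∑ i ∈ I k, t i := by
    intro k
    obtain ⟨m, hm, hmin⟩ := Finset.exists_max_image (I k) t (hne k)
    have h1 : ∑ i ∈ I k, min (t i) δ = min (t m) δ + ∑ i ∈ (I k).erase m, min (t i) δ :=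
      (Finset.add_sum_erase _ _ hm).symm
    have h2 : ∑ i ∈ (I k).erase m, min (t i) δ ≤ ∑ i ∈ (I k).erase m, t i :=
      Finset.sum_le_sum (fun i _ => min_le_left _ _)
    have h3 : ∑ i ∈ (I k).erase m, t i = ∑ i ∈ I k, t i - t m :=
      Finset.sum_erase_eq_sub hm
    have hcard : (0:ℝ) < ((I k).card : ℝ) :=
      Nat.cast_pos.mpr (Finset.card_pos.mpr (hne k))
    have hle : ∑ i ∈ I k, t i ≤ ((I k).card : ℝ) * t m := by
      have := Finset.sum_le_card_nsmul (I k) t (t m) hmin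
      simpa [nsmul_eq_mul] using this
    have hNk : ((I k).card : ℝ) ≤ N := Finset.le_sup' (fun k => ((I k).card : ℝ)) (Finset.mem_univ k)
    have hSnn : 0 ≤ ∑ i ∈ I k, t i := Finset.sum_nonneg fun i _ => ht i
    have htm : (∑ i ∈ I k, t i) / N ≤ t m := by
      rw [div_le_iff₀ hNpos]
      calc ∑ i ∈ I k, t i ≤ ((I k).card : ℝ) * t m := hle
        _ ≤ N * t m := by
            have h0 : 0 ≤ t m := ht m
            nlinarith
        _ = t m * N := mul_comm _ _
    have hmle : min (t m) δ ≤ δ := min_le_right _ _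
    have hfin : (1 - 1/N) * ∑ i ∈ I k, t i = ∑ i ∈ I k, t i - (∑ i ∈ I k, t i) / N := by
      field_simp
    rw [h1, hfin]
    linarith
  calc ∑ i, min (t i) δ = ∑ k, ∑ i ∈ I k, min (t i) δ := hsum _
    _ ≤ ∑ k : Fin (K+1), (δ + (1 - 1/N) * ∑ i ∈ I k, t i) :=
        Finset.sum_le_sum fun k _ => key k
    _ = (K + 1 : ℝ) * δ + (1 - 1/N) * ∑ i, t i := by
        rw [Finset.sum_add_distrib, Finset.sum_const, ← Finset.mul_sum, hsum t]
        simp [mul_comm]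
end
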